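/- Let ≤ be a well-order on W and let Π be a ≤-compatible term-rewriting system on V = W →₀ k. Then Π is confluent if and only if k·Irr(Π) ∩ I_Π = 0. -/

import Mathlib

/-- One-step rewriting relation of a term-rewriting system `S ⊆ W × (W →₀ k)`. -/
def RewStep {k W : Type*} [Field k] (S : Set (W × (W →₀ k))) (f g : W →₀ k) : Prop :=
  ∃ t v, (t, v) ∈ S ∧ f t ≠ 0 ∧ g = f - Finsupp.single t (f t) + f t • v

/-- A rewriting system is `≤`-compatible if every monomial in the support of a
right-hand side is strictly smaller than the left-hand side. -/
def RewCompatible {k W : Type*} [Field k] [LinearOrder W] (S : Set (W × (W →₀ k))) : Prop :=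
  ∀ p ∈ S, ∀ w ∈ (p.2 : W →₀ k).support, w < p.1

/-- Confluence: any two rewritings of a common element are joinable. -/
def RewConfluent {k W : Type*} [Field k] (S : Set (W × (W →₀ k))) : Prop :=
  ∀ f g₁ g₂ : W →₀ k, Relation.ReflTransGen (RewStep S) f g₁ →
    Relation.ReflTransGen (RewStep S) f g₂ →
      ∃ h, Relation.ReflTransGen (RewStep S) g₁ h ∧ Relation.ReflTransGen (RewStep S) g₂ h

/-- The linear span `I_S` of the elements `δ_t - v` for the rules `(t, v)` of `S`. -/
noncomputable def RewIdeal {k W : Type*} [Field k] (S : Set (W × (W →₀ k))) : Submodule k (W →₀ k) :=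
  Submodule.span k {x : W →₀ k | ∃ p ∈ S, x = Finsupp.single p.1 (1 : k) - p.2}

/-- `Irr(S)`: the set of basis elements that are not the left-hand side of any rule. -/
def RewIrr {k W : Type*} [Field k] (S : Set (W × (W →₀ k))) : Set W :=
  {w | ∀ v, (w, v) ∉ S}

/-- `k·Irr(S)`: the linear span of the irreducible basis elements. -/
noncomputable def RewIrrSpan {k W : Type*} [Field k] (S : Set (W × (W →₀ k))) : Submodule k (W →₀ k) :=
  Submodule.span k ((fun w => Finsupp.single w (1 : k)) '' RewIrr S)

/-!
Normal forms exist because a rewriting step at `t` kills the coefficient of `t` and only touches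
smaller basis elements, so the reduction terminates on a well-ordered basis. Two normal forms
of the same element differ by an element of `k·Irr(S) ∩ I_S`; hence the intersection being zero
forces confluence. Conversely, rewriting is compatible with addition (the two sums `f + g` and
`h + g` for a step `f → h` rewrite to a common element at the same `t`) and with scalars, so under
confluence every element of `I_S` reduces to `0`; an irreducible element only reduces to itself.
-/

open Relation Finsupp

section Field

variable {k W : Type*} [Field k] {S : Set (W × (W →₀ k))}

noncomputable def rewriteAt (f : W →₀ k) (t : W) (v : W →₀ k) : W →₀ k :=
  f - single t (f t) + f t • v

lemma rewStep_iff {f g : W →₀ k} :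
    RewStep S f g ↔ ∃ t v, (t, v) ∈ S ∧ f t ≠ 0 ∧ g = rewriteAt f t v :=
  Iff.rfl

lemma rewriteAt_of_apply_eq_zero {f : W →₀ k} {t : W} (v : W →₀ k) (h : f t = 0) :
    rewriteAt f t v = f := by
  simp [rewriteAt, h]

lemma reflTransGen_rewriteAt {t : W} {v : W →₀ k} (hv : (t, v) ∈ S) (f : W →₀ k) :
    ReflTransGen (RewStep S) f (rewriteAt f t v) := by
  by_cases hf : f t = 0
  · rw [rewriteAt_of_apply_eq_zero v hf]
  · exact .single ⟨t, v, hv, hf, rfl⟩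

lemma RewStep.smul {f g : W →₀ k} (h : RewStep S f g) {c : k} (hc : c ≠ 0) :
    RewStep S (c • f) (c • g) := by
  obtain ⟨t, v, hv, hft, rfl⟩ := h
  refine ⟨t, v, hv, by simp [hc, hft], ?_⟩
  simp only [smul_add, smul_sub, Finsupp.smul_apply, smul_single, smul_smul, smul_eq_mul]

lemma reflTransGen_smul {f g : W →₀ k} (h : ReflTransGen (RewStep S) f g) (c : k) :
    ReflTransGen (RewStep S) (c • f) (c • g) := by
  rcases eq_or_ne c 0 with rfl | hc
  · simp only [zero_smul, ReflTransGen.refl]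
  · exact h.lift _ fun _ _ hstep => hstep.smul hc

lemma RewStep.sub_mem_rewIdeal {f g : W →₀ k} (h : RewStep S f g) : f - g ∈ RewIdeal S := by
  obtain ⟨t, v, hv, -, rfl⟩ := rewStep_iff.1 h
  have : f - rewriteAt f t v = f t • (single t 1 - v) := by
    rw [rewriteAt, smul_sub, smul_single, smul_eq_mul, mul_one]; abel
  rw [this]
  exact Submodule.smul_mem _ _ (Submodule.subset_span ⟨(t, v), hv, rfl⟩)

lemma sub_mem_rewIdeal_of_reflTransGen {f g : W →₀ k} (h : ReflTransGen (RewStep S) f g) :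
    f - g ∈ RewIdeal S := by
  induction h with
  | refl => simp
  | tail _ hstep ih => simpa using add_mem ih hstep.sub_mem_rewIdeal

lemma mem_rewIrrSpan_iff {f : W →₀ k} : f ∈ RewIrrSpan S ↔ ↑f.support ⊆ RewIrr S := by
  rw [RewIrrSpan, ← supported_eq_span_single, mem_supported]

lemma eq_of_reflTransGen_of_mem_rewIrrSpan {f g : W →₀ k} (hf : f ∈ RewIrrSpan S)
    (h : ReflTransGen (RewStep S) f g) : g = f := by
  rcases h.cases_head with h | ⟨_, ⟨t, v, hv, hft, -⟩, -⟩
  · exact h.symm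
  · exact absurd hv (mem_rewIrrSpan_iff.1 hf (mem_support_iff.2 hft) v)

end Field

section Compatible

variable {k W : Type*} [Field k] [LinearOrder W] {S : Set (W × (W →₀ k))}

lemma RewCompatible.apply_eq_zero_of_le (hS : RewCompatible S) {t : W} {v : W →₀ k}
    (hv : (t, v) ∈ S) {j : W} (hj : t ≤ j) : v j = 0 :=
  notMem_support_iff.1 fun hmem => (hS (t, v) hv j hmem).not_ge hj

lemma RewCompatible.rewriteAt_apply_self (hS : RewCompatible S) {t : W} {v : W →₀ k}
    (hv : (t, v) ∈ S) (f : W →₀ k) : rewriteAt f t v t = 0 := by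
  simp [rewriteAt, hS.apply_eq_zero_of_le hv le_rfl]

lemma RewCompatible.rewriteAt_apply_of_lt (hS : RewCompatible S) {t : W} {v : W →₀ k}
    (hv : (t, v) ∈ S) (f : W →₀ k) {j : W} (hj : t < j) : rewriteAt f t v j = f j := by
  simp [rewriteAt, hj.ne, hS.apply_eq_zero_of_le hv hj.le]

lemma RewCompatible.wellFounded [WellFoundedLT W] (hS : RewCompatible S) :
    WellFounded (flip (RewStep S)) := by
  classical
  -- a step at `t` zeroes the coefficient of `t` and fixes all larger ones
  let μ : (W →₀ k) → Colex (W →₀ ℕ) :=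
    fun f => toColex (f.mapRange (fun c => if c = 0 then 0 else 1) (by simp))
  refine Subrelation.wf (fun {g f} hstep => ?_) (InvImage.wf μ wellFounded_lt)
  obtain ⟨t, v, hv, hft, rfl⟩ := rewStep_iff.1 hstep
  refine Colex.lt_iff.2 ⟨t, fun j hj => ?_, ?_⟩
  · simp [μ, hS.rewriteAt_apply_of_lt hv f hj]
  · simp [μ, hS.rewriteAt_apply_self hv f, hft]

lemma RewCompatible.exists_reflTransGen_mem_rewIrrSpan [WellFoundedLT W]
    (hS : RewCompatible S) (f : W →₀ k) :
    ∃ g, ReflTransGen (RewStep S) f g ∧ g ∈ RewIrrSpan S := by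
  induction f using hS.wellFounded.induction with
  | _ f ih =>
    by_cases hf : f ∈ RewIrrSpan S
    · exact ⟨f, .refl, hf⟩
    obtain ⟨t, ht, hirr⟩ := Set.not_subset.1 (mt mem_rewIrrSpan_iff.2 hf)
    obtain ⟨v, hv⟩ : ∃ v, (t, v) ∈ S := by simpa [RewIrr] using hirr
    have hstep : RewStep S f (rewriteAt f t v) := ⟨t, v, hv, mem_support_iff.1 ht, rfl⟩
    obtain ⟨g, hg, hirr⟩ := ih _ hstep
    exact ⟨g, .head hstep hg, hirr⟩

lemma RewCompatible.rewriteAt_add_rewriteAt (hS : RewCompatible S) {t : W} {v : W →₀ k}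
    (hv : (t, v) ∈ S) (f g : W →₀ k) :
    rewriteAt (rewriteAt f t v + g) t v = rewriteAt (f + g) t v := by
  have hg : (rewriteAt f t v + g) t = g t := by
    rw [Finsupp.add_apply, hS.rewriteAt_apply_self hv f, zero_add]
  unfold rewriteAt at hg ⊢
  rw [hg, Finsupp.add_apply, single_add, add_smul]
  abel

lemma RewCompatible.join_add_of_rewStep (hS : RewCompatible S) {f h : W →₀ k}
    (hfh : RewStep S f h) (g : W →₀ k) : Join (ReflTransGen (RewStep S)) (f + g) (h + g) := by
  obtain ⟨t, v, hv, -, rfl⟩ := rewStep_iff.1 hfh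
  refine ⟨rewriteAt (f + g) t v, reflTransGen_rewriteAt hv _, ?_⟩
  simpa only [hS.rewriteAt_add_rewriteAt hv] using reflTransGen_rewriteAt hv (rewriteAt f t v + g)

lemma RewConfluent.join_add (hc : RewConfluent S) (hS : RewCompatible S) {f h : W →₀ k}
    (hfh : ReflTransGen (RewStep S) f h) (g : W →₀ k) :
    Join (ReflTransGen (RewStep S)) (f + g) (h + g) := by
  have := isTrans_join hc
  induction hfh with
  | refl => exact refl _
  | tail _ hstep ih => exact _root_.trans ih (hS.join_add_of_rewStep hstep g)

lemma RewConfluent.reflTransGen_zero_of_mem_rewIdeal (hc : RewConfluent S)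
    (hS : RewCompatible S) {f : W →₀ k} (hf : f ∈ RewIdeal S) :
    ReflTransGen (RewStep S) f 0 := by
  have := isTrans_join hc
  induction hf using Submodule.span_induction with
  | mem x hx =>
    obtain ⟨⟨t, v⟩, hv, rfl⟩ := hx
    have : rewriteAt (single t 1 - v) t v = 0 := by
      simp [rewriteAt, hS.apply_eq_zero_of_le hv le_rfl]
    exact this ▸ reflTransGen_rewriteAt hv (single t 1 - v)
  | zero => exact .refl
  | add x y _ _ hx hy =>
    have hy0 : Join (ReflTransGen (RewStep S)) (0 + y) 0 := ⟨0, by rwa [zero_add], .refl⟩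
    obtain ⟨z, hxz, h0z⟩ := _root_.trans (hc.join_add hS hx y) hy0
    rwa [eq_of_reflTransGen_of_mem_rewIrrSpan (zero_mem _) h0z] at hxz
  | smul c x _ hx => simpa using reflTransGen_smul hx c

end Compatible

/-- A `≤`-compatible rewriting system over a well-ordered set is confluent
if and only if `k·Irr(S) ∩ I_S = 0`. -/
theorem confluent_iff_irr_inf_ideal_eq_bot {k W : Type*} [Field k] [LinearOrder W]
    [WellFoundedLT W] (S : Set (W × (W →₀ k))) (hS : RewCompatible S) :
    RewConfluent S ↔ RewIrrSpan S ⊓ RewIdeal S = ⊥ := by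
  constructor
  · intro hc
    refine eq_bot_iff.2 fun f ⟨hirr, hI⟩ => (Submodule.mem_bot k).2 ?_
    exact (eq_of_reflTransGen_of_mem_rewIrrSpan hirr
      (hc.reflTransGen_zero_of_mem_rewIdeal hS hI)).symm
  · intro hbot f g₁ g₂ h₁ h₂
    obtain ⟨n₁, hn₁, hirr₁⟩ := hS.exists_reflTransGen_mem_rewIrrSpan g₁
    obtain ⟨n₂, hn₂, hirr₂⟩ := hS.exists_reflTransGen_mem_rewIrrSpan g₂
    have hI : n₁ - n₂ ∈ RewIdeal S := by
      simpa using sub_mem (sub_mem_rewIdeal_of_reflTransGen (h₂.trans hn₂))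
        (sub_mem_rewIdeal_of_reflTransGen (h₁.trans hn₁))
    have hn : n₁ - n₂ ∈ RewIrrSpan S ⊓ RewIdeal S := ⟨sub_mem hirr₁ hirr₂, hI⟩
    rw [hbot, Submodule.mem_bot, sub_eq_zero] at hn
    exact ⟨n₁, hn₁, hn ▸ hn₂⟩
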